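/- arXiv:1406.3768 — 3 statements merged into one kernel-verified Lean document; each statement's English description precedes it below -/
import Mathlib

section
/- Let X = (X_σ)_{σ∈T} be a tree-indexed Markov chain on the full binary tree with values in a measurable space E and pair transition kernel p, and let (Σ_k) be an independent symmetric random walk on T starting from the root. Then (X_{Σ_k})_{k≥0} is a Markov chain on E with transition kernel p_R(x,A) = ½(p(x, A × E) + p(x, E × A)). -/
/-!
Condition on the first `k + 1` coins `a`. The coins are independent of the tree, and on the event
`{coins = a}`, of probability `2⁻¹ ^ (k + 1)`, the observed path `R 0, …, R k` is the path of `X`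
from the root to `Fin.init a`, an event of the generations `≤ k`, while `R (k + 1)` is the child
`X (k + 1) a`. The tree Markov property replaces `g (X (k + 1) a)` by the integral of `g` against
the corresponding marginal of `p (X k (Fin.init a))`; summing over the last coin produces the two
marginals with weight `2⁻¹` each, i.e. `∫ g ∂(pR (R k))`.
-/

open MeasureTheory ProbabilityTheory
open scoped ENNReal

section

variable {Ω E : Type*} [MeasurableSpace E]

abbrev sigmaUpToGen (X : (k : ℕ) → (Fin k → Bool) → Ω → E) (k : ℕ) : MeasurableSpace Ω :=
  MeasurableSpace.comap (fun ω (j : Fin (k + 1)) (v : Fin j → Bool) => X j v ω)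
    MeasurableSpace.pi

/-- The ancestor of `v` in generation `j` is the prefix of `v` of length `j`. -/
def treePath {k : ℕ} (v : Fin k → Bool) (x : ((n : ℕ) × (Fin n → Bool)) → E) :
    Fin (k + 1) → E :=
  fun j => x ⟨j, fun i => v (Fin.castLE (Nat.lt_succ_iff.mp j.2) i)⟩

lemma measurable_treePath {k : ℕ} (v : Fin k → Bool) : Measurable (treePath (E := E) v) :=
  measurable_pi_lambda _ fun _ => measurable_pi_apply _

lemma measurableSet_sigmaUpToGen_treePath {X : (k : ℕ) → (Fin k → Bool) → Ω → E} {k : ℕ}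
    (v : Fin k → Bool) {S : Set (Fin (k + 1) → E)} (hS : MeasurableSet S) :
    MeasurableSet[sigmaUpToGen X k] {ω | treePath v (fun pr => X pr.1 pr.2 ω) ∈ S} :=
  ⟨(fun y j => y j fun i => v (Fin.castLE (Nat.lt_succ_iff.mp j.2) i)) ⁻¹' S,
    (measurable_pi_lambda _ fun _ => (measurable_pi_apply _).comp (measurable_pi_apply _)) hS,
    rfl⟩

variable [MeasurableSpace Ω] {P : Measure Ω}

lemma Measurable.integrable_of_abs_le [IsFiniteMeasure P] {f : Ω → ℝ} (hf : Measurable f)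
    {M : ℝ} (hM : ∀ ω, |f ω| ≤ M) : Integrable f P :=
  .of_bound hf.aestronglyMeasurable M (ae_of_all _ hM)

lemma abs_integral_le_of_abs_le (μ : Measure Ω) [IsProbabilityMeasure μ] {f : Ω → ℝ} {M : ℝ}
    (hM : ∀ ω, |f ω| ≤ M) : |∫ ω, f ω ∂μ| ≤ M := by
  simpa using norm_integral_le_of_norm_le_const (μ := μ) (f := f) (ae_of_all _ hM)

lemma measurable_apply_of_countable {ι : Type*} [Countable ι] [MeasurableSpace ι]
    [MeasurableSingletonClass ι] {f : ι → Ω → E} (hf : ∀ i, Measurable (f i)) {V : Ω → ι}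
    (hV : Measurable V) : Measurable fun ω => f (V ω) ω :=
  (measurable_from_prod_countable_left (f := fun q : Ω × ι => f q.2 q.1) hf).comp
    (measurable_id.prodMk hV)

lemma measure_coin_eq_inv_two [IsProbabilityMeasure P] {c : Ω → Bool} (hc : Measurable c)
    (hfair : P {ω | c ω = true} = 2⁻¹) (b : Bool) : P (c ⁻¹' {b}) = 2⁻¹ := by
  cases b
  · have hfalse : c ⁻¹' {false} = (c ⁻¹' {true})ᶜ := by ext ω; simp
    rw [hfalse, prob_compl_eq_one_sub (hc (measurableSet_singleton true))]
    simp [Set.preimage, hfair, ENNReal.one_sub_inv_two]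
  · exact hfair

lemma measure_coins_eq_inv_two_pow [IsProbabilityMeasure P] {C : ℕ → Ω → Bool}
    (hC : ∀ k, Measurable (C k)) (hiid : iIndepFun C P)
    (hfair : ∀ k, P {ω | C k ω = true} = 2⁻¹) (n : ℕ) (a : Fin n → Bool) :
    P ((fun ω (i : Fin n) => C i ω) ⁻¹' {a}) = 2⁻¹ ^ n := by
  have hset : (fun ω (i : Fin n) => C i ω) ⁻¹' {a} = ⋂ i : Fin n, C i ⁻¹' {a i} := by
    ext ω; simp [funext_iff]
  rw [hset, (hiid.precomp Fin.val_injective).meas_iInter fun i =>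
    ⟨{a i}, measurableSet_singleton _, rfl⟩]
  simp [measure_coin_eq_inv_two (hC _) (hfair _)]

lemma integral_eq_sum_of_indepFun [IsProbabilityMeasure P] {α β : Type*} [Fintype α]
    [MeasurableSpace α] [MeasurableSingletonClass α] [MeasurableSpace β]
    {U : Ω → α} {Y : Ω → β} (hU : Measurable U) (hY : Measurable Y) (hUY : IndepFun U Y P)
    {F : α → β → ℝ} (hF : ∀ a, Measurable (F a))
    (hFint : ∀ a, Integrable (fun ω => F a (Y ω)) P) :
    ∫ ω, F (U ω) (Y ω) ∂P = ∑ a, P.real (U ⁻¹' {a}) * ∫ ω, F a (Y ω) ∂P := by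
  have hsplit : ∀ ω, F (U ω) (Y ω)
      = ∑ a, ({a} : Set α).indicator 1 (U ω) * F a (Y ω) := by
    intro ω
    rw [Finset.sum_eq_single (U ω) (fun a _ ha => by simp [Ne.symm ha]) (by simp)]
    simp
  have hind : ∀ a, Measurable (({a} : Set α).indicator (1 : α → ℝ)) := fun a =>
    measurable_const.indicator (measurableSet_singleton a)
  have hterm : ∀ a, Integrable (fun ω => ({a} : Set α).indicator 1 (U ω) * F a (Y ω)) P :=
    fun a => (hFint a).bdd_mul ((hind a).comp hU).aestronglyMeasurable
      (c := 1) (ae_of_all _ fun ω => by by_cases h : U ω = a <;> simp [h])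
  simp_rw [hsplit]
  rw [integral_finsetSum _ fun a _ => hterm a]
  refine Finset.sum_congr rfl fun a _ => ?_
  have := (hUY.comp (hind a) (hF a)).integral_mul_eq_mul_integral
    ((hind a).comp hU).aestronglyMeasurable ((hF a).comp hY).aestronglyMeasurable
  rw [show (fun ω => ({a} : Set α).indicator 1 (U ω) * F a (Y ω))
    = (({a} : Set α).indicator 1 ∘ U) * (F a ∘ Y) from rfl, this]
  congr 1
  rw [← integral_indicator_one (hU (measurableSet_singleton a))]
  congr 1 with ω

lemma integral_half_map_fst_add_half_map_snd (μ : Measure (E × E)) [IsFiniteMeasure μ]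
    {g : E → ℝ} (hg : Measurable g) {M : ℝ} (hM : ∀ x, |g x| ≤ M) :
    ∫ x, g x ∂((2⁻¹ : ℝ≥0∞) • μ.map Prod.fst + (2⁻¹ : ℝ≥0∞) • μ.map Prod.snd)
      = 2⁻¹ * ∫ y, g y.1 ∂μ + 2⁻¹ * ∫ y, g y.2 ∂μ := by
  have hint : ∀ ν : Measure E, IsFiniteMeasure ν → Integrable g ν := fun ν _ =>
    hg.integrable_of_abs_le hM
  rw [integral_add_measure ((hint _ inferInstance).smul_measure (by simp))
      ((hint _ inferInstance).smul_measure (by simp)),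
    integral_smul_measure, integral_smul_measure,
    integral_map measurable_fst.aemeasurable hg.aestronglyMeasurable,
    integral_map measurable_snd.aemeasurable hg.aestronglyMeasurable]
  simp

lemma measurable_half_integral_fst_add_half_integral_snd (p : Kernel E (E × E))
    {g : E → ℝ} (hg : Measurable g) :
    Measurable fun x => 2⁻¹ * ∫ y, g y.1 ∂(p x) + 2⁻¹ * ∫ y, g y.2 ∂(p x) :=
  ((hg.comp measurable_fst).stronglyMeasurable.integral_kernel (κ := p)).measurable.const_mul _
    |>.add (((hg.comp measurable_snd).stronglyMeasurable.integral_kernel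
      (κ := p)).measurable.const_mul _)

lemma abs_half_integral_fst_add_half_integral_snd_le (p : Kernel E (E × E)) [IsMarkovKernel p]
    {g : E → ℝ} {M : ℝ} (hM : ∀ x, |g x| ≤ M) (x : E) :
    |2⁻¹ * ∫ y, g y.1 ∂(p x) + 2⁻¹ * ∫ y, g y.2 ∂(p x)| ≤ M := by
  have h₁ := abs_le.mp (abs_integral_le_of_abs_le (p x) fun y => hM y.1)
  have h₂ := abs_le.mp (abs_integral_le_of_abs_le (p x) fun y => hM y.2)
  exact abs_le.mpr ⟨by linarith, by linarith⟩

lemma sigmaUpToGen_le {X : (k : ℕ) → (Fin k → Bool) → Ω → E} (hX : ∀ k v, Measurable (X k v))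
    (k : ℕ) : sigmaUpToGen X k ≤ ‹MeasurableSpace Ω› :=
  (measurable_pi_lambda _ fun _ => measurable_pi_lambda _ fun _ => hX _ _).comap_le

def IsTreeMarkov (P : Measure Ω) (X : (k : ℕ) → (Fin k → Bool) → Ω → E)
    (p : Kernel E (E × E)) : Prop :=
  ∀ (k : ℕ) (g : (Fin k → Bool) → E × E → ℝ),
    (∀ v, Measurable (g v)) → (∀ v, ∃ C, ∀ x, |g v x| ≤ C) →
    (fun ω => ∏ v : Fin k → Bool, ∫ y, g v y ∂(p (X k v ω)))
      =ᵐ[P] P[fun ω => ∏ v : Fin k → Bool,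
          g v (X (k + 1) (Fin.snoc v false) ω, X (k + 1) (Fin.snoc v true) ω) | sigmaUpToGen X k]

lemma IsTreeMarkov.condExp_children_eq {X : (k : ℕ) → (Fin k → Bool) → Ω → E}
    {p : Kernel E (E × E)} [IsMarkovKernel p] (hX : IsTreeMarkov P X p) {k : ℕ}
    (v : Fin k → Bool) {f : E × E → ℝ} (hf : Measurable f) {M : ℝ} (hM : ∀ y, |f y| ≤ M) :
    (fun ω => ∫ y, f y ∂(p (X k v ω)))
      =ᵐ[P] P[fun ω => f (X (k + 1) (Fin.snoc v false) ω, X (k + 1) (Fin.snoc v true) ω)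
        | sigmaUpToGen X k] := by
  classical
  convert hX k (fun w => if w = v then f else fun _ => 1)
    (fun w => by split_ifs <;> first | exact hf | exact measurable_const)
    (fun w => by split_ifs <;> first | exact ⟨M, hM⟩ | exact ⟨1, fun _ => by simp⟩) using 2
  · rw [Finset.prod_eq_single v (fun w _ hw => by simp [hw]) (by simp)]
    simp
  · funext ω
    rw [Finset.prod_eq_single v (fun w _ hw => by simp [hw]) (by simp)]
    simp

lemma IsTreeMarkov.setIntegral_children_eq [IsProbabilityMeasure P]
    {X : (k : ℕ) → (Fin k → Bool) → Ω → E} (hXmeas : ∀ k v, Measurable (X k v))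
    {p : Kernel E (E × E)} [IsMarkovKernel p] (hX : IsTreeMarkov P X p) {k : ℕ}
    (v : Fin k → Bool) {f : E × E → ℝ} (hf : Measurable f) {M : ℝ} (hM : ∀ y, |f y| ≤ M)
    {T : Set Ω} (hT : MeasurableSet[sigmaUpToGen X k] T) :
    ∫ ω in T, f (X (k + 1) (Fin.snoc v false) ω, X (k + 1) (Fin.snoc v true) ω) ∂P
      = ∫ ω in T, ∫ y, f y ∂(p (X k v ω)) ∂P := by
  have hint : Integrable
      (fun ω => f (X (k + 1) (Fin.snoc v false) ω, X (k + 1) (Fin.snoc v true) ω)) P :=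
    (hf.comp ((hXmeas _ _).prodMk (hXmeas _ _))).integrable_of_abs_le fun ω => hM _
  rw [← setIntegral_condExp (sigmaUpToGen_le hXmeas k) hint hT]
  exact setIntegral_congr_ae (sigmaUpToGen_le hXmeas k _ hT)
    ((hX.condExp_children_eq v hf hM).mono fun ω hω _ => hω.symm)

lemma setIntegral_observedPath_eq_sum [IsProbabilityMeasure P]
    {X : (k : ℕ) → (Fin k → Bool) → Ω → E} (hXmeas : ∀ k v, Measurable (X k v))
    {C : ℕ → Ω → Bool} (hCmeas : ∀ k, Measurable (C k)) (hCiid : iIndepFun C P)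
    (hCfair : ∀ k, P {ω | C k ω = true} = 2⁻¹)
    (hCX : Indep (MeasurableSpace.comap (fun ω => fun k : ℕ => C k ω) MeasurableSpace.pi)
      (MeasurableSpace.comap (fun ω => fun pr : (k : ℕ) × (Fin k → Bool) => X pr.1 pr.2 ω)
        MeasurableSpace.pi) P)
    {k : ℕ} {S : Set (Fin (k + 1) → E)} (hS : MeasurableSet S)
    {G : (Fin (k + 1) → Bool) → (((n : ℕ) × (Fin n → Bool)) → E) → ℝ}
    (hG : ∀ a, Measurable (G a)) {M : ℝ} (hM : ∀ a x, |G a x| ≤ M) :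
    ∫ ω in {ω | (fun j : Fin (k + 1) => X j (fun i => C i ω) ω) ∈ S},
        G (fun i => C i ω) (fun pr => X pr.1 pr.2 ω) ∂P
      = 2⁻¹ ^ (k + 1) * ∑ a, ∫ ω in {ω | treePath (Fin.init a) (fun pr => X pr.1 pr.2 ω) ∈ S},
          G a (fun pr => X pr.1 pr.2 ω) ∂P := by
  set Y : Ω → ((n : ℕ) × (Fin n → Bool)) → E := fun ω pr => X pr.1 pr.2 ω
  set U : Ω → Fin (k + 1) → Bool := fun ω i => C i ω
  have hY : Measurable Y := measurable_pi_lambda _ fun _ => hXmeas _ _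
  have hU : Measurable U := measurable_pi_lambda _ fun _ => hCmeas _
  have hUY : IndepFun U Y P :=
    ((IndepFun_iff_Indep _ _ _).mpr hCX).comp
      (φ := fun (c : ℕ → Bool) (i : Fin (k + 1)) => c i) (ψ := id)
      (measurable_pi_lambda _ fun _ => measurable_pi_apply _) measurable_id
  set A : (Fin (k + 1) → Bool) → Set (((n : ℕ) × (Fin n → Bool)) → E) :=
    fun a => treePath (Fin.init a) ⁻¹' S
  have hA : ∀ a, MeasurableSet (A a) := fun a => measurable_treePath _ hS
  have hGY : ∀ a, Integrable (fun ω => G a (Y ω)) P := fun a =>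
    ((hG a).comp hY).integrable_of_abs_le fun _ => hM _ _
  have hindicator : ∀ a, (fun ω => (A a).indicator (G a) (Y ω))
      = (Y ⁻¹' A a).indicator fun ω => G a (Y ω) := fun a => by
    ext ω; by_cases h : Y ω ∈ A a <;> simp [h]
  -- the observed path is the tree path to the vertex chosen by the first `k` coins
  have hpath : {ω | (fun j : Fin (k + 1) => X j (fun i => C i ω) ω) ∈ S}
      = {ω | Y ω ∈ A (U ω)} := rfl
  have hpath_meas : MeasurableSet {ω | Y ω ∈ A (U ω)} :=
    measurable_apply_of_countable
      (f := fun (a : Fin (k + 1) → Bool) ω => treePath (Fin.init a) (Y ω))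
      (fun a => (measurable_treePath (Fin.init a)).comp hY) hU hS
  calc _ = ∫ ω, (A (U ω)).indicator (G (U ω)) (Y ω) ∂P := by
        rw [hpath, ← integral_indicator hpath_meas]
        congr 1 with ω
    _ = ∑ a, P.real (U ⁻¹' {a}) * ∫ ω, (A a).indicator (G a) (Y ω) ∂P :=
        integral_eq_sum_of_indepFun hU hY hUY (fun a => (hG a).indicator (hA a))
          fun a => hindicator a ▸ (hGY a).indicator (hY (hA a))
    _ = _ := by
        have hU_law : ∀ a, P (U ⁻¹' {a}) = 2⁻¹ ^ (k + 1) :=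
          measure_coins_eq_inv_two_pow hCmeas hCiid hCfair (k + 1)
        simp_rw [measureReal_def, hU_law, hindicator, integral_indicator (hY (hA _)),
          Finset.mul_sum]
        simp
        rfl

lemma setIntegral_observed_step [IsProbabilityMeasure P]
    {X : (k : ℕ) → (Fin k → Bool) → Ω → E} (hXmeas : ∀ k v, Measurable (X k v))
    {p : Kernel E (E × E)} [IsMarkovKernel p] (hMarkov : IsTreeMarkov P X p)
    {C : ℕ → Ω → Bool} (hCmeas : ∀ k, Measurable (C k)) (hCiid : iIndepFun C P)
    (hCfair : ∀ k, P {ω | C k ω = true} = 2⁻¹)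
    (hCX : Indep (MeasurableSpace.comap (fun ω => fun k : ℕ => C k ω) MeasurableSpace.pi)
      (MeasurableSpace.comap (fun ω => fun pr : (k : ℕ) × (Fin k → Bool) => X pr.1 pr.2 ω)
        MeasurableSpace.pi) P)
    {k : ℕ} {S : Set (Fin (k + 1) → E)} (hS : MeasurableSet S)
    {g : E → ℝ} (hg : Measurable g) {M : ℝ} (hM : ∀ x, |g x| ≤ M) :
    ∫ ω in {ω | (fun j : Fin (k + 1) => X j (fun i => C i ω) ω) ∈ S},
        g (X (k + 1) (fun i => C i ω) ω) ∂P
      = ∫ ω in {ω | (fun j : Fin (k + 1) => X j (fun i => C i ω) ω) ∈ S},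
          (2⁻¹ * ∫ y, g y.1 ∂(p (X k (fun i => C i ω) ω))
            + 2⁻¹ * ∫ y, g y.2 ∂(p (X k (fun i => C i ω) ω))) ∂P := by
  set H : E → ℝ := fun x => 2⁻¹ * ∫ y, g y.1 ∂(p x) + 2⁻¹ * ∫ y, g y.2 ∂(p x)
  have hH := measurable_half_integral_fst_add_half_integral_snd p hg
  have hHM := abs_half_integral_fst_add_half_integral_snd_le p hM
  have hlhs := setIntegral_observedPath_eq_sum hXmeas hCmeas hCiid hCfair hCX hS
    (G := fun a x => g (x ⟨k + 1, a⟩)) (fun _ => hg.comp (measurable_pi_apply _))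
    (fun _ _ => hM _)
  have hrhs := setIntegral_observedPath_eq_sum hXmeas hCmeas hCiid hCfair hCX hS
    (G := fun a x => H (x ⟨k, Fin.init a⟩)) (fun _ => hH.comp (measurable_pi_apply _))
    (fun _ _ => hHM _)
  refine hlhs.trans (Eq.trans ?_ hrhs.symm)
  congr 1
  rw [← (Fin.snocEquiv fun _ => Bool).sum_comp, ← (Fin.snocEquiv fun _ => Bool).sum_comp]
  simp only [Fin.snocEquiv, Equiv.coe_fn_mk, Fin.init_snoc, Fintype.sum_prod_type,
    Fintype.sum_bool, ← Finset.sum_add_distrib]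
  refine Finset.sum_congr rfl fun v _ => ?_
  have hT := measurableSet_sigmaUpToGen_treePath (X := X) v hS
  have hfst := hMarkov.setIntegral_children_eq hXmeas v (hg.comp measurable_fst)
    (fun y => hM y.1) hT
  have hsnd := hMarkov.setIntegral_children_eq hXmeas v (hg.comp measurable_snd)
    (fun y => hM y.2) hT
  have hI : ∀ f : E × E → ℝ, Measurable f → (∀ y, |f y| ≤ M) →
      Integrable (fun ω => ∫ y, f y ∂(p (X k v ω))) P := fun _ hf hfM =>
    (hf.stronglyMeasurable.integral_kernel (κ := p)).measurable.comp (hXmeas k v)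
      |>.integrable_of_abs_le fun ω => abs_integral_le_of_abs_le _ hfM
  simp only [Function.comp_apply] at hfst hsnd
  have hHint : Integrable (fun ω => H (X k v ω)) P :=
    (hH.comp (hXmeas k v)).integrable_of_abs_le fun ω => hHM _
  rw [hfst, hsnd,
    ← integral_add (hI (fun y => g y.2) (hg.comp measurable_snd) fun y => hM y.2).integrableOn
      (hI (fun y => g y.1) (hg.comp measurable_fst) fun y => hM y.1).integrableOn,
    ← integral_add hHint.integrableOn hHint.integrableOn]
  congr 1 with ω
  simp only [H]
  ring

end

/-- If `X` is a tree-indexed Markov chain on the full binary tree with pair transition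
kernel `p`, and `(Σ_k)` is an independent symmetric random walk from the root (coded by
i.i.d. fair coins `C`, so that `Σ_k = (C 0, …, C (k-1))`), then the observed process
`R k = X_{Σ_k}` is a Markov chain on `E` with transition kernel
`p_R(x, A) = ½ (p(x, A × E) + p(x, E × A))`. Vertices of generation `k` are coded as
`v : Fin k → Bool`, with children `Fin.snoc v false` and `Fin.snoc v true`. -/
theorem stmt_7 {Ω : Type*} [MeasurableSpace Ω] (P : Measure Ω) [IsProbabilityMeasure P]
    {E : Type*} [MeasurableSpace E]
    (X : (k : ℕ) → (Fin k → Bool) → Ω → E) (hXmeas : ∀ k v, Measurable (X k v))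
    (p : ProbabilityTheory.Kernel E (E × E)) [IsMarkovKernel p]
    -- the tree Markov property: conditionally on all states up to generation `k`, the
    -- pairs of children states are independent with laws `p (X k v ·)`:
    (hMarkov : ∀ (k : ℕ) (g : (Fin k → Bool) → E × E → ℝ),
      (∀ v, Measurable (g v)) → (∀ v, ∃ C, ∀ x, |g v x| ≤ C) →
      (fun ω => ∏ v : Fin k → Bool, ∫ y, g v y ∂(p (X k v ω)))
        =ᵐ[P] MeasureTheory.condExp
          (MeasurableSpace.comap
            (fun ω => fun j : Fin (k + 1) => fun v : Fin (j : ℕ) → Bool => X j v ω)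
            MeasurableSpace.pi) P
          (fun ω => ∏ v : Fin k → Bool,
            g v (X (k + 1) (Fin.snoc v false) ω, X (k + 1) (Fin.snoc v true) ω)))
    -- `C` are i.i.d. fair coin flips, independent of the whole tree `X`:
    (C : ℕ → Ω → Bool) (hCmeas : ∀ k, Measurable (C k))
    (hCiid : iIndepFun C P)
    (hCfair : ∀ k, P {ω | C k ω = true} = 2⁻¹)
    (hCX : Indep
      (MeasurableSpace.comap (fun ω => fun k : ℕ => C k ω) MeasurableSpace.pi)
      (MeasurableSpace.comap
        (fun ω => fun pr : (k : ℕ) × (Fin k → Bool) => X pr.1 pr.2 ω)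
        MeasurableSpace.pi) P)
    -- the observed process and the mixed kernel:
    (R : ℕ → Ω → E) (hR : ∀ k ω, R k ω = X k (fun i => C (i : ℕ) ω) ω)
    (pR : E → Measure E)
    (hpR : ∀ x, pR x = (2⁻¹ : ℝ≥0∞) • (p x).map Prod.fst
      + (2⁻¹ : ℝ≥0∞) • (p x).map Prod.snd) :
    -- conclusion: `R` is a Markov chain with transition kernel `pR`:
    ∀ (k : ℕ) (g : E → ℝ), Measurable g → (∃ C', ∀ x, |g x| ≤ C') →
      MeasureTheory.condExp
          (MeasurableSpace.comap (fun ω => fun j : Fin (k + 1) => R (j : ℕ) ω)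
            MeasurableSpace.pi) P
          (fun ω => g (R (k + 1) ω))
        =ᵐ[P] fun ω => ∫ y, g y ∂(pR (R k ω)) := by
  intro k g hg ⟨M, hM⟩
  have hRmeas : ∀ j, Measurable (R j) := fun j => by
    rw [funext (hR j)]
    exact measurable_apply_of_countable (hXmeas j) (measurable_pi_lambda _ fun i => hCmeas i)
  have hΦ : Measurable fun ω (j : Fin (k + 1)) => R j ω :=
    measurable_pi_lambda _ fun j => hRmeas j
  have hpR_eq : ∀ x, ∫ y, g y ∂(pR x) = 2⁻¹ * ∫ y, g y.1 ∂(p x) + 2⁻¹ * ∫ y, g y.2 ∂(p x) :=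
    fun x => hpR x ▸ integral_half_map_fst_add_half_map_snd (p x) hg hM
  have hH := measurable_half_integral_fst_add_half_integral_snd p hg
  have hHM := abs_half_integral_fst_add_half_integral_snd_le p hM
  simp_rw [hpR_eq]
  refine (ae_eq_condExp_of_forall_setIntegral_eq hΦ.comap_le
    ((hg.comp (hRmeas _)).integrable_of_abs_le fun _ => hM _)
    (fun _ _ _ => ((hH.comp (hRmeas k)).integrable_of_abs_le fun _ => hHM _).integrableOn)
    ?_ ?_).symm
  · rintro _ ⟨S, hS, rfl⟩ -
    simp only [Set.preimage, Function.comp_apply, hR]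
    exact (setIntegral_observed_step hXmeas hMarkov hCmeas hCiid hCfair hCX hS hg hM).symm
  · have hRk : Measurable[MeasurableSpace.comap (fun ω (j : Fin (k + 1)) => R j ω)
        MeasurableSpace.pi] (R k) :=
      (measurable_pi_apply (Fin.last k)).comp
        (comap_measurable fun ω (j : Fin (k + 1)) => R j ω)
    exact (hH.comp hRk).aestronglyMeasurable
end

section
/- With Z_k the empirical measure of generation k of a tree-indexed Markov chain and R_k the chain observed along an independent uniform random walk, one has almost surely ⟨Z_k, φ⟩ = E[φ(R_k) | Z_k] for every bounded measurable φ, and consequently E[⟨Z_k, φ⟩ | Z_{k-1}] = E[φ(R_k) | Z_{k-1}]. -/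
/-!
Let `Y` be the whole configuration `(X_σ)` of generations `k` and `k + 1`. The walk's endpoint
`U` is independent of `Y`, so conditioning `φ(X_U)` on `Y` averages over `U`; since `U` is
uniform, this gives `E[φ(R_{k+1}) | Y] = ⟨Z_{k+1}, φ⟩`. Both `Z_k` and `Z_{k+1}` are functions of
`Y`, so the tower property yields both claims, the first one because `⟨Z_{k+1}, φ⟩` is itself a
measurable function of `Z_{k+1}`.
-/

open MeasureTheory ProbabilityTheory Filter
open scoped ENNReal

section CondExpIndep

variable {Ω ι β : Type*} {mΩ : MeasurableSpace Ω} {P : Measure Ω} [IsFiniteMeasure P]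
  [MeasurableSpace ι] [MeasurableSpace β]

theorem condExp_indicator_of_indepFun {U : Ω → ι} {Y : Ω → β} (hU : Measurable U)
    (hY : Measurable Y) (hUY : U ⟂ᵢ[P] Y) {G : β → ℝ} (hG : Measurable G)
    (hGY : Integrable (fun ω => G (Y ω)) P) {A : Set Ω}
    (hA : MeasurableSet[MeasurableSpace.comap U inferInstance] A) :
    P[A.indicator (fun ω => G (Y ω)) | MeasurableSpace.comap Y inferInstance]
      =ᵐ[P] fun ω => P.real A * G (Y ω) := by
  have hU_le : MeasurableSpace.comap U inferInstance ≤ mΩ := hU.comap_le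
  have hA_meas : MeasurableSet A := hU_le _ hA
  have hmul : A.indicator (fun ω => G (Y ω)) = (fun ω => G (Y ω)) * A.indicator 1 := by
    ext ω
    by_cases hω : ω ∈ A <;> simp [hω]
  have hGY_meas : StronglyMeasurable[MeasurableSpace.comap Y inferInstance] fun ω => G (Y ω) :=
    (hG.comp (comap_measurable Y)).stronglyMeasurable
  have hindicator : P[A.indicator 1 | MeasurableSpace.comap Y inferInstance]
      =ᵐ[P] fun _ => P.real A := by
    have := condExp_indep_eq hU_le hY.comap_le
      ((stronglyMeasurable_one (α := Ω) (β := ℝ)).indicator hA)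
      ((IndepFun_iff_Indep _ _ _).1 hUY)
    rwa [integral_indicator_one hA_meas] at this
  rw [hmul]
  have hindicator_int : Integrable (A.indicator (1 : Ω → ℝ)) P :=
    (integrable_const 1).indicator hA_meas
  filter_upwards [condExp_mul_of_stronglyMeasurable_left hGY_meas
    (hmul ▸ hGY.indicator hA_meas) hindicator_int, hindicator] with ω h₁ h₂
  rw [h₁, Pi.mul_apply, h₂, mul_comm]

theorem condExp_comp_indepFun_eq_sum [Fintype ι] [MeasurableSingletonClass ι] {U : Ω → ι}
    {Y : Ω → β} (hU : Measurable U) (hY : Measurable Y) (hUY : U ⟂ᵢ[P] Y) {F : ι → β → ℝ}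
    (hF : ∀ v, Measurable (F v)) (hFY : ∀ v, Integrable (fun ω => F v (Y ω)) P) :
    P[fun ω => F (U ω) (Y ω) | MeasurableSpace.comap Y inferInstance]
      =ᵐ[P] fun ω => ∑ v, P.real (U ⁻¹' {v}) * F v (Y ω) := by
  classical
  have hdecomp : (fun ω => F (U ω) (Y ω)) = ∑ v, (U ⁻¹' {v}).indicator fun ω => F v (Y ω) := by
    ext ω
    simp [Finset.sum_apply, Set.indicator_apply]
  have hterm v := condExp_indicator_of_indepFun hU hY hUY (hF v) (hFY v)
    ⟨{v}, measurableSet_singleton v, rfl⟩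
  rw [hdecomp]
  filter_upwards [condExp_finsetSum
    (fun v _ => (hFY v).indicator (hU (measurableSet_singleton v))) _,
    ae_all_iff.2 hterm] with ω h₁ h₂
  rw [h₁, Finset.sum_apply]
  exact Finset.sum_congr rfl fun v _ => h₂ v

end CondExpIndep

theorem measurable_integral_of_integrable {α E : Type*} {mα : MeasurableSpace α}
    [MeasurableSpace E] {Z : α → Measure E} (hZ : Measurable Z) {φ : E → ℝ} (hφ : Measurable φ)
    (hφZ : ∀ a, Integrable φ (Z a)) : Measurable fun a => ∫ x, φ x ∂(Z a) := by
  simp_rw [integral_eq_lintegral_pos_part_sub_lintegral_neg_part (hφZ _)]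
  exact ((Measure.measurable_lintegral hφ.ennreal_ofReal).comp hZ).ennreal_toReal.sub
    ((Measure.measurable_lintegral hφ.neg.ennreal_ofReal).comp hZ).ennreal_toReal

section EmpiricalMeasure

variable {ι E : Type*} [Fintype ι] [MeasurableSpace E]

noncomputable def empiricalMeasure (x : ι → E) : Measure E :=
  (Fintype.card ι : ℝ≥0∞)⁻¹ • ∑ i, Measure.dirac (x i)

theorem empiricalMeasure_fin_bool {n : ℕ} (x : (Fin n → Bool) → E) :
    empiricalMeasure x = ((2 : ℝ≥0∞) ^ n)⁻¹ • ∑ v, Measure.dirac (x v) := by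
  simp [empiricalMeasure]

theorem measurable_empiricalMeasure : Measurable (empiricalMeasure : (ι → E) → Measure E) := by
  have hsum : Measurable fun x : ι → E => ∑ i, Measure.dirac (x i) :=
    Finset.measurable_sum _ fun i _ => Measure.measurable_dirac.comp (measurable_pi_apply i)
  refine Measure.measurable_of_measurable_coe _ fun s hs => ?_
  simp only [empiricalMeasure, Measure.smul_apply, smul_eq_mul]
  exact ((Measure.measurable_coe hs).comp hsum).const_mul _

theorem integrable_empiricalMeasure [Nonempty ι] {φ : E → ℝ} (hφ : Measurable φ) (x : ι → E) :
    Integrable φ (empiricalMeasure x) :=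
  (integrable_finsetSum_measure.2 fun _ _ =>
    integrable_dirac' hφ.stronglyMeasurable enorm_lt_top).smul_measure
    (ENNReal.inv_ne_top.2 (Nat.cast_ne_zero.2 Fintype.card_ne_zero))

theorem integral_empiricalMeasure {φ : E → ℝ} (hφ : Measurable φ) (x : ι → E) :
    ∫ y, φ y ∂(empiricalMeasure x) = (Fintype.card ι : ℝ)⁻¹ * ∑ i, φ (x i) := by
  rw [empiricalMeasure, integral_smul_measure, integral_finsetSum_measure fun i _ =>
    integrable_dirac' hφ.stronglyMeasurable enorm_lt_top]
  simp [integral_dirac' _ _ hφ.stronglyMeasurable]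

end EmpiricalMeasure

/-- With `Z_k` the empirical measure of generation `k` (here generations `k` and `k+1`
are considered, with states `Xk` and `Xk1`) and `R_{k+1} = Xk1 (U ·)` the chain observed
along an independent uniform random walk, one has almost surely
`⟨Z_{k+1}, φ⟩ = E[φ(R_{k+1}) | Z_{k+1}]`, and consequently
`E[⟨Z_{k+1}, φ⟩ | Z_k] = E[φ(R_{k+1}) | Z_k]`. -/
theorem stmt_10 {Ω : Type*} [MeasurableSpace Ω] (P : Measure Ω) [IsProbabilityMeasure P]
    {E : Type*} [MeasurableSpace E] (k : ℕ)
    (Xk : (Fin k → Bool) → Ω → E) (Xk1 : (Fin (k + 1) → Bool) → Ω → E)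
    (hXkmeas : ∀ v, Measurable (Xk v)) (hXk1meas : ∀ v, Measurable (Xk1 v))
    (U : Ω → Fin (k + 1) → Bool) (hUmeas : Measurable U)
    (hUunif : ∀ v : Fin (k + 1) → Bool, P {ω | U ω = v} = 2⁻¹ ^ (k + 1))
    (hUindep : IndepFun U
      (fun ω => ((fun v => Xk v ω), (fun v => Xk1 v ω))) P)
    (Zk Zk1 : Ω → Measure E)
    (hZk : ∀ ω, Zk ω = ((2 : ℝ≥0∞) ^ k)⁻¹ • ∑ v : Fin k → Bool, Measure.dirac (Xk v ω))
    (hZk1 : ∀ ω, Zk1 ω =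
      ((2 : ℝ≥0∞) ^ (k + 1))⁻¹ • ∑ v : Fin (k + 1) → Bool, Measure.dirac (Xk1 v ω))
    (φ : E → ℝ) (hφmeas : Measurable φ) (C : ℝ) (hφbd : ∀ x, |φ x| ≤ C) :
    ((fun ω => ((2 : ℝ) ^ (k + 1))⁻¹ * ∑ v : Fin (k + 1) → Bool, φ (Xk1 v ω))
        =ᵐ[P] P[(fun ω => φ (Xk1 (U ω) ω)) |
          MeasurableSpace.comap Zk1 inferInstance]) ∧
    (P[(fun ω => ((2 : ℝ) ^ (k + 1))⁻¹ * ∑ v : Fin (k + 1) → Bool, φ (Xk1 v ω)) |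
          MeasurableSpace.comap Zk inferInstance]
        =ᵐ[P] P[(fun ω => φ (Xk1 (U ω) ω)) |
          MeasurableSpace.comap Zk inferInstance]) := by
  set Y : Ω → ((Fin k → Bool) → E) × ((Fin (k + 1) → Bool) → E) :=
    fun ω => ((fun v => Xk v ω), (fun v => Xk1 v ω))
  set g : Ω → ℝ := fun ω => ((2 : ℝ) ^ (k + 1))⁻¹ * ∑ v : Fin (k + 1) → Bool, φ (Xk1 v ω)
  have hY : Measurable Y :=
    (measurable_pi_lambda _ hXkmeas).prodMk (measurable_pi_lambda _ hXk1meas)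
  have hφX : ∀ v, Integrable (fun ω => φ (Xk1 v ω)) P := fun v =>
    .of_bound (hφmeas.comp (hXk1meas v)).aestronglyMeasurable C (ae_of_all _ fun _ => hφbd _)
  have hg : Integrable g P := (integrable_finsetSum _ fun v _ => hφX v).const_mul _
  have hcond : P[fun ω => φ (Xk1 (U ω) ω) | MeasurableSpace.comap Y inferInstance] =ᵐ[P] g := by
    refine (condExp_comp_indepFun_eq_sum hUmeas hY hUindep (F := fun v p => φ (p.2 v))
      (fun v => hφmeas.comp ((measurable_pi_apply v).comp measurable_snd)) hφX).trans
      (ae_of_all _ fun ω => ?_)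
    simp [measureReal_def, Set.preimage, hUunif, Finset.mul_sum, g, Y]
  have htower : ∀ m ≤ MeasurableSpace.comap Y inferInstance,
      P[g | m] =ᵐ[P] P[fun ω => φ (Xk1 (U ω) ω) | m] := fun m hm =>
    (condExp_congr_ae hcond).symm.trans (condExp_condExp_of_le hm hY.comap_le)
  have hZk_eq : Zk = fun ω => empiricalMeasure (Y ω).1 :=
    funext fun ω => (hZk ω).trans (empiricalMeasure_fin_bool _).symm
  have hZk1_eq : Zk1 = fun ω => empiricalMeasure (Y ω).2 :=
    funext fun ω => (hZk1 ω).trans (empiricalMeasure_fin_bool _).symm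
  have hZk_le : MeasurableSpace.comap Zk inferInstance ≤ MeasurableSpace.comap Y inferInstance :=
    hZk_eq ▸ (measurable_empiricalMeasure.comp (measurable_fst.comp (comap_measurable Y))).comap_le
  have hZk1_le : MeasurableSpace.comap Zk1 inferInstance ≤ MeasurableSpace.comap Y inferInstance :=
    hZk1_eq ▸ (measurable_empiricalMeasure.comp (measurable_snd.comp (comap_measurable Y))).comap_le
  have hg_Zk1 : StronglyMeasurable[MeasurableSpace.comap Zk1 inferInstance] g := by
    have hg_eq : g = fun ω => ∫ x, φ x ∂(Zk1 ω) := by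
      ext1 ω
      simp [hZk1_eq, integral_empiricalMeasure hφmeas, g, Y]
    rw [hg_eq]
    exact (measurable_integral_of_integrable (comap_measurable Zk1) hφmeas
      fun ω => hZk1_eq ▸ integrable_empiricalMeasure hφmeas _).stronglyMeasurable
  refine ⟨?_, htower _ hZk_le⟩
  rw [← condExp_of_stronglyMeasurable (hZk1_le.trans hY.comap_le) hg_Zk1 hg]
  exact htower _ hZk1_le
end

section
/- Suppose the sequence of E-valued càdlàg processes (R̃ⁿ)_{n≥1} satisfies the compact containment condition, and define the measure-valued processes Z̃ⁿ with the relation E[⟨Z̃ⁿ_t, 1_A⟩] = P(R̃ⁿ_t ∈ A) and, for random times τ ≤ T, E[⟨Z̃ⁿ_τ, 1_A⟩] = P(R̃ⁿ_τ ∈ A). Then (Z̃ⁿ)_{n≥1} satisfies the compact containment condition in P(E): for every ε > 0 and T ≥ 0 there is a compact set L ⊆ P(E) with sup_n P(Z̃ⁿ_t ∉ L for some 0 ≤ t ≤ T) < ε. -/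
/-! By Prokhorov's theorem the sets `{μ | ∀ k, μ (K k)ᶜ ≤ u k}`, with `K k` compact and `u k → 0`,
are compact, so it suffices to bound the probability that `Z n t` gives mass more than `u k` to
`(K k)ᶜ` at some `t ≤ T`. Evaluating `Z n` at a random time `τ` that selects such a `t` whenever
there is one, the linking identity turns this into the probability that `R n` leaves `K k` before
`T`, which is small by compact containment of `R`. Since `ω ↦ Z n (τ ω) ω` need not be measurable,
Markov's inequality is run on the mass of `K k` itself, through a measurable minorant of it. -/

open MeasureTheory ProbabilityTheory
open scoped ENNReal

open Set
open scoped NNReal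

lemma lintegral_add_mul_measure_le_measure_univ {α : Type*} [MeasurableSpace α]
    (μ : Measure α) {g : α → ℝ≥0∞} {c : ℝ≥0∞} {A : Set α} (hg : ∀ x, g x ≤ 1)
    (hA : ∀ x ∈ A, g x + c ≤ 1) :
    ∫⁻ x, g x ∂μ + c * μ A ≤ μ univ := by
  obtain ⟨g', hg'_meas, hg'_le, hg'_eq⟩ := exists_measurable_le_lintegral_eq μ g
  set B := {x | g' x + c ≤ 1}
  have hB : MeasurableSet B := (hg'_meas.add_const c) measurableSet_Iic
  have hAB : A ⊆ B := fun x hx => (add_le_add_left (hg'_le x) c).trans (hA x hx)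
  have hpoint : ∀ x, g' x + B.indicator (fun _ => c) x ≤ 1 := by
    intro x
    by_cases hx : x ∈ B
    · rw [indicator_of_mem hx]; exact hx
    · simpa [indicator_of_notMem hx] using (hg'_le x).trans (hg x)
  calc ∫⁻ x, g x ∂μ + c * μ A
      ≤ ∫⁻ x, g' x ∂μ + c * μ B := by rw [hg'_eq]; gcongr
    _ = ∫⁻ x, g' x + B.indicator (fun _ => c) x ∂μ := by
      rw [lintegral_add_left hg'_meas, lintegral_indicator_const hB]
    _ ≤ ∫⁻ _, 1 ∂μ := lintegral_mono hpoint
    _ = μ univ := by simp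

lemma mul_measure_exists_gt_compl_le {Ω ι E : Type*} [MeasurableSpace Ω] (P : Measure Ω)
    [IsProbabilityMeasure P] [MeasurableSpace E]
    {R : ι → Ω → E} {Z : ι → Ω → ProbabilityMeasure E} {I : Set ι} (hI : I.Nonempty)
    {F : Set E} (hF : MeasurableSet F)
    (hlink : ∀ τ : Ω → ι, (∀ ω, τ ω ∈ I) →
      ∫⁻ ω, (Z (τ ω) ω : Measure E) F ∂P = P {ω | R (τ ω) ω ∈ F})
    (c : ℝ≥0) :
    c * P {ω | ∃ t ∈ I, c < Z t ω Fᶜ} ≤ P {ω | ∃ t ∈ I, R t ω ∉ F} := by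
  classical
  set A := {ω | ∃ t ∈ I, c < Z t ω Fᶜ}
  let τ : Ω → ι := fun ω => if h : ω ∈ A then h.choose else hI.some
  have hτI : ∀ ω, τ ω ∈ I := by
    intro ω
    by_cases h : ω ∈ A
    · simpa [τ, h] using h.choose_spec.1
    · simpa [τ, h] using hI.some_mem
  have hτA : ∀ ω ∈ A, c < Z (τ ω) ω Fᶜ := by
    intro ω h
    simpa [τ, h] using h.choose_spec.2
  set g : Ω → ℝ≥0∞ := fun ω => (Z (τ ω) ω : Measure E) F
  have hg_le : ∫⁻ ω, g ω ∂P + c * P A ≤ 1 := by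
    refine (lintegral_add_mul_measure_le_measure_univ P (fun _ => prob_le_one) ?_).trans_eq
      measure_univ
    intro ω hω
    have hc : (c : ℝ≥0∞) ≤ (Z (τ ω) ω : Measure E) Fᶜ := by
      rw [← ProbabilityMeasure.ennreal_coeFn_eq_coeFn_toMeasure]
      exact_mod_cast (hτA ω hω).le
    calc g ω + c ≤ (Z (τ ω) ω : Measure E) F + (Z (τ ω) ω : Measure E) Fᶜ := by gcongr
      _ = 1 := prob_add_prob_compl hF
  have hg_ge : 1 ≤ ∫⁻ ω, g ω ∂P + P {ω | ∃ t ∈ I, R t ω ∉ F} := by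
    calc (1 : ℝ≥0∞) = P univ := measure_univ.symm
      _ ≤ P {ω | R (τ ω) ω ∈ F} + P {ω | R (τ ω) ω ∈ F}ᶜ := measure_univ_le_add_compl _
      _ ≤ ∫⁻ ω, g ω ∂P + P {ω | ∃ t ∈ I, R t ω ∉ F} := by
        rw [hlink τ hτI]
        gcongr
        exact fun ω hω => ⟨τ ω, hτI ω, hω⟩
  have hg_ne_top : ∫⁻ ω, g ω ∂P ≠ ∞ :=
    ne_top_of_le_ne_top ENNReal.one_ne_top (le_self_add.trans hg_le)
  exact (ENNReal.add_le_add_iff_left hg_ne_top).1 (hg_le.trans hg_ge)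

theorem stmt_12_general {Ω : Type*} [MeasurableSpace Ω] (P : Measure Ω) [IsProbabilityMeasure P]
    {E : Type*} [MetricSpace E] [MeasurableSpace E] [BorelSpace E]
    (R : ℕ → ℝ → Ω → E) (Z : ℕ → ℝ → Ω → ProbabilityMeasure E)
    (hlinkτ : ∀ (n : ℕ) (T : ℝ) (τ : Ω → ℝ), (∀ ω, τ ω ∈ Set.Icc 0 T) →
      ∀ A : Set E, MeasurableSet A →
        ∫⁻ ω, (Z n (τ ω) ω : Measure E) A ∂P = P {ω | R n (τ ω) ω ∈ A})
    (hcc : ∀ ε : ℝ≥0∞, 0 < ε → ∀ T : ℝ, 0 ≤ T → ∃ K : Set E, IsCompact K ∧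
      (⨆ n, P {ω | ∃ t ∈ Set.Icc 0 T, R n t ω ∉ K}) < ε) :
    ∀ ε : ℝ≥0∞, 0 < ε → ∀ T : ℝ, 0 ≤ T → ∃ L : Set (ProbabilityMeasure E), IsCompact L ∧
      (⨆ n, P {ω | ∃ t ∈ Set.Icc 0 T, Z n t ω ∉ L}) < ε := by
  intro ε hε T hT
  obtain ⟨d, hd_pos, hd_sum⟩ := ENNReal.exists_pos_sum_of_countable hε.ne' ℕ
  obtain ⟨u, -, hu_pos, hu_lim⟩ := exists_seq_strictAnti_tendsto (0 : ℝ≥0)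
  choose K hK hRK using fun k => hcc (u k * d k)
    (ENNReal.mul_pos (by simpa using (hu_pos k).ne') (by simpa using (hd_pos k).ne')) T hT
  refine ⟨{μ | ∀ k, μ (K k)ᶜ ≤ u k},
    isCompact_setOfPred_probabilityMeasure_mass_eq_compl_isCompact_le hu_lim hK
      (Or.inl inferInstance), lt_of_le_of_lt (iSup_le fun n => ?_) hd_sum⟩
  have hexceed : ∀ k, P {ω | ∃ t ∈ Icc 0 T, u k < Z n t ω (K k)ᶜ} ≤ d k := by
    intro k
    refine (ENNReal.mul_le_mul_iff_right (by simpa using (hu_pos k).ne')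
      ENNReal.coe_ne_top).1 ?_
    calc _ ≤ P {ω | ∃ t ∈ Icc 0 T, R n t ω ∉ K k} :=
          mul_measure_exists_gt_compl_le P ⟨0, left_mem_Icc.2 hT⟩ (hK k).measurableSet
            (fun τ hτ => hlinkτ n T τ hτ _ (hK k).measurableSet) (u k)
      _ ≤ u k * d k := (le_iSup (fun n => P {ω | ∃ t ∈ Icc 0 T, R n t ω ∉ K k}) n).trans
          (hRK k).le
  calc P {ω | ∃ t ∈ Icc 0 T, Z n t ω ∉ {μ | ∀ k, μ (K k)ᶜ ≤ u k}}
      ≤ P (⋃ k, {ω | ∃ t ∈ Icc 0 T, u k < Z n t ω (K k)ᶜ}) := by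
        refine measure_mono fun ω ⟨t, ht, hZ⟩ => ?_
        obtain ⟨k, hk⟩ := not_forall.1 hZ
        exact mem_iUnion.2 ⟨k, t, ht, not_le.1 hk⟩
    _ ≤ ∑' k, (d k : ℝ≥0∞) := (measure_iUnion_le _).trans (ENNReal.tsum_le_tsum hexceed)

/-- If the `E`-valued processes `R n` satisfy the compact containment condition and the
measure-valued processes `Z n` are linked to `R n` by
`E[⟨Z n t, 1_A⟩] = P(R n t ∈ A)` (also at random times `τ ≤ T`), then the processes
`Z n` satisfy the compact containment condition in `P(E)` with the weak topology. -/
theorem stmt_12 {Ω : Type*} [MeasurableSpace Ω] (P : Measure Ω) [IsProbabilityMeasure P]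
    {E : Type*} [MetricSpace E] [CompleteSpace E] [TopologicalSpace.SeparableSpace E]
    [MeasurableSpace E] [BorelSpace E]
    (R : ℕ → ℝ → Ω → E) (Z : ℕ → ℝ → Ω → ProbabilityMeasure E)
    (hlink : ∀ (n : ℕ) (t : ℝ) (A : Set E), MeasurableSet A →
      ∫⁻ ω, (Z n t ω : Measure E) A ∂P = P {ω | R n t ω ∈ A})
    (hlinkτ : ∀ (n : ℕ) (T : ℝ) (τ : Ω → ℝ), (∀ ω, τ ω ∈ Set.Icc 0 T) →
      ∀ A : Set E, MeasurableSet A →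
        ∫⁻ ω, (Z n (τ ω) ω : Measure E) A ∂P = P {ω | R n (τ ω) ω ∈ A})
    (hcc : ∀ ε : ℝ≥0∞, 0 < ε → ∀ T : ℝ, 0 ≤ T → ∃ K : Set E, IsCompact K ∧
      (⨆ n, P {ω | ∃ t ∈ Set.Icc 0 T, R n t ω ∉ K}) < ε) :
    ∀ ε : ℝ≥0∞, 0 < ε → ∀ T : ℝ, 0 ≤ T → ∃ L : Set (ProbabilityMeasure E), IsCompact L ∧
      (⨆ n, P {ω | ∃ t ∈ Set.Icc 0 T, Z n t ω ∉ L}) < ε :=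
  stmt_12_general P R Z hlinkτ hcc
end
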